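/- The element r = z(D ∧ P₀ + K₁ ∧ P₁ + (K₂+J) ∧ P₂) in 𝓜₃ ⊗ 𝓜₃ satisfies the classical Yang–Baxter equation. -/

import Mathlib

open TensorProduct

noncomputable section

variable {L : Type*} [LieRing L] [LieAlgebra ℝ L]

/-- x ⊗ y ⊗ 1 in U(L) ⊗ U(L) ⊗ U(L) -/
def t12 (x y : L) :
    UniversalEnvelopingAlgebra ℝ L ⊗[ℝ]
      (UniversalEnvelopingAlgebra ℝ L ⊗[ℝ] UniversalEnvelopingAlgebra ℝ L) :=
  (UniversalEnvelopingAlgebra.ι ℝ x) ⊗ₜ ((UniversalEnvelopingAlgebra.ι ℝ y) ⊗ₜ 1)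

/-- x ⊗ 1 ⊗ y -/
def t13 (x y : L) :
    UniversalEnvelopingAlgebra ℝ L ⊗[ℝ]
      (UniversalEnvelopingAlgebra ℝ L ⊗[ℝ] UniversalEnvelopingAlgebra ℝ L) :=
  (UniversalEnvelopingAlgebra.ι ℝ x) ⊗ₜ ((1 : UniversalEnvelopingAlgebra ℝ L) ⊗ₜ
    (UniversalEnvelopingAlgebra.ι ℝ y))

/-- 1 ⊗ x ⊗ y -/
def t23 (x y : L) :
    UniversalEnvelopingAlgebra ℝ L ⊗[ℝ]
      (UniversalEnvelopingAlgebra ℝ L ⊗[ℝ] UniversalEnvelopingAlgebra ℝ L) :=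
  (1 : UniversalEnvelopingAlgebra ℝ L) ⊗ₜ ((UniversalEnvelopingAlgebra.ι ℝ x) ⊗ₜ
    (UniversalEnvelopingAlgebra.ι ℝ y))

def w12 (x y : L) := t12 x y - t12 y x
def w13 (x y : L) := t13 x y - t13 y x
def w23 (x y : L) := t23 x y - t23 y x


set_option synthInstance.maxHeartbeats 1000000
set_option maxHeartbeats 8000000

def T (x y z : L) :
    UniversalEnvelopingAlgebra ℝ L ⊗[ℝ]
      (UniversalEnvelopingAlgebra ℝ L ⊗[ℝ] UniversalEnvelopingAlgebra ℝ L) :=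
  (UniversalEnvelopingAlgebra.ι ℝ x) ⊗ₜ ((UniversalEnvelopingAlgebra.ι ℝ y) ⊗ₜ
    (UniversalEnvelopingAlgebra.ι ℝ z))

lemma c12_13 (x y u v : L) : ⁅t12 x y, t13 u v⁆ = T ⁅x, u⁆ y v := by
  simp [t12, t13, T, Ring.lie_def, Algebra.TensorProduct.tmul_mul_tmul, sub_tmul]

lemma c12_23 (x y u v : L) : ⁅t12 x y, t23 u v⁆ = T x ⁅y, u⁆ v := by
  simp [t12, t23, T, Ring.lie_def, Algebra.TensorProduct.tmul_mul_tmul, sub_tmul, tmul_sub]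

lemma c13_23 (x y u v : L) : ⁅t13 x y, t23 u v⁆ = T x u ⁅y, v⁆ := by
  simp [t13, t23, T, Ring.lie_def, Algebra.TensorProduct.tmul_mul_tmul, sub_tmul, tmul_sub]

lemma T_add₁ (x x' y z : L) : T (x + x') y z = T x y z + T x' y z := by
  simp [T, add_tmul]
lemma T_add₂ (x y y' z : L) : T x (y + y') z = T x y z + T x y' z := by
  simp [T, add_tmul, tmul_add]
lemma T_add₃ (x y z z' : L) : T x y (z + z') = T x y z + T x y z' := by
  simp [T, add_tmul, tmul_add]
lemma T_smul₁ (s : ℝ) (x y z : L) : T (s • x) y z = s • T x y z := by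
  simp [T, smul_tmul']
lemma T_smul₂ (s : ℝ) (x y z : L) : T x (s • y) z = s • T x y z := by
  rw [T, T, map_smul, ← smul_tmul', tmul_smul]
lemma T_smul₃ (s : ℝ) (x y z : L) : T x y (s • z) = s • T x y z := by
  simp [T, tmul_smul]
lemma T_neg₁ (x y z : L) : T (-x) y z = -T x y z := by
  simp [T, neg_tmul]
lemma T_neg₂ (x y z : L) : T x (-y) z = -T x y z := by
  simp [T, neg_tmul, tmul_neg]
lemma T_neg₃ (x y z : L) : T x y (-z) = -T x y z := by
  simp [T, tmul_neg]
lemma T_zero₁ (y z : L) : T 0 y z = 0 := by simp [T]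
lemma T_zero₂ (x z : L) : T x 0 z = 0 := by simp [T]
lemma T_zero₃ (x y : L) : T x y 0 = 0 := by simp [T]

abbrev U3 := UniversalEnvelopingAlgebra ℝ L ⊗[ℝ]
      (UniversalEnvelopingAlgebra ℝ L ⊗[ℝ] UniversalEnvelopingAlgebra ℝ L)

lemma tsub_lie (a b c : U3 (L := L)) : ⁅a - b, c⁆ = ⁅a, c⁆ - ⁅b, c⁆ := by
  simp only [Ring.lie_def, sub_mul, mul_sub]; abel
lemma tlie_sub (a b c : U3 (L := L)) : ⁅a, b - c⁆ = ⁅a, b⁆ - ⁅a, c⁆ := by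
  simp only [Ring.lie_def, sub_mul, mul_sub]; abel
lemma tadd_lie (a b c : U3 (L := L)) : ⁅a + b, c⁆ = ⁅a, c⁆ + ⁅b, c⁆ := by
  simp only [Ring.lie_def, add_mul, mul_add]; abel
lemma tlie_add (a b c : U3 (L := L)) : ⁅a, b + c⁆ = ⁅a, b⁆ + ⁅a, c⁆ := by
  simp only [Ring.lie_def, add_mul, mul_add]; abel
lemma tsmul_lie (s : ℝ) (a c : U3 (L := L)) : ⁅s • a, c⁆ = s • ⁅a, c⁆ := by
  simp only [Ring.lie_def, smul_mul_assoc, mul_smul_comm, smul_sub]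
lemma tlie_smul (s : ℝ) (a c : U3 (L := L)) : ⁅a, s • c⁆ = s • ⁅a, c⁆ := by
  simp only [Ring.lie_def, smul_mul_assoc, mul_smul_comm, smul_sub]

lemma cw12_13 (x y u v : L) : ⁅w12 x y, w13 u v⁆ =
    T ⁅x, u⁆ y v - T ⁅x, v⁆ y u - T ⁅y, u⁆ x v + T ⁅y, v⁆ x u := by
  simp only [w12, w13, tlie_sub, tsub_lie, c12_13]; abel

lemma cw12_23 (x y u v : L) : ⁅w12 x y, w23 u v⁆ =
    T x ⁅y, u⁆ v - T x ⁅y, v⁆ u - T y ⁅x, u⁆ v + T y ⁅x, v⁆ u := by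
  simp only [w12, w23, tlie_sub, tsub_lie, c12_23]; abel

lemma cw13_23 (x y u v : L) : ⁅w13 x y, w23 u v⁆ =
    T x u ⁅y, v⁆ - T x v ⁅y, u⁆ - T y u ⁅x, v⁆ + T y v ⁅x, u⁆ := by
  simp only [w13, w23, tlie_sub, tsub_lie, c13_23]; abel

/-- r = z(D∧P₀ + K₁∧P₁ + (K₂+J)∧P₂) satisfies the classical
Yang–Baxter equation in U(𝓜₃)⊗U(𝓜₃)⊗U(𝓜₃). -/
theorem stmt10 (z : ℝ) (J P₀ P₁ P₂ K₁ K₂ C₀ C₁ C₂ D : L)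
    (hJP₁ : ⁅J, P₁⁆ = P₂) (hJP₂ : ⁅J, P₂⁆ = -P₁)
    (hJK₁ : ⁅J, K₁⁆ = K₂) (hJK₂ : ⁅J, K₂⁆ = -K₁)
    (hJC₁ : ⁅J, C₁⁆ = C₂) (hJC₂ : ⁅J, C₂⁆ = -C₁)
    (hJP₀ : ⁅J, P₀⁆ = 0) (hJC₀ : ⁅J, C₀⁆ = 0) (hJD : ⁅J, D⁆ = 0)
    (hDP₀ : ⁅D, P₀⁆ = P₀) (hDP₁ : ⁅D, P₁⁆ = P₁) (hDP₂ : ⁅D, P₂⁆ = P₂)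
    (hDC₀ : ⁅D, C₀⁆ = -C₀) (hDC₁ : ⁅D, C₁⁆ = -C₁) (hDC₂ : ⁅D, C₂⁆ = -C₂)
    (hDK₁ : ⁅D, K₁⁆ = 0) (hDK₂ : ⁅D, K₂⁆ = 0)
    (hK₁P₀ : ⁅K₁, P₀⁆ = P₁) (hK₂P₀ : ⁅K₂, P₀⁆ = P₂)
    (hK₁P₁ : ⁅K₁, P₁⁆ = P₀) (hK₂P₂ : ⁅K₂, P₂⁆ = P₀)
    (hK₁P₂ : ⁅K₁, P₂⁆ = 0) (hK₂P₁ : ⁅K₂, P₁⁆ = 0)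
    (hK₁C₀ : ⁅K₁, C₀⁆ = C₁) (hK₂C₀ : ⁅K₂, C₀⁆ = C₂)
    (hK₁C₁ : ⁅K₁, C₁⁆ = C₀) (hK₂C₂ : ⁅K₂, C₂⁆ = C₀)
    (hK₁C₂ : ⁅K₁, C₂⁆ = 0) (hK₂C₁ : ⁅K₂, C₁⁆ = 0)
    (hKK : ⁅K₁, K₂⁆ = -J)
    (hP₀C₀ : ⁅P₀, C₀⁆ = (2 : ℝ) • D)
    (hP₁C₁ : ⁅P₁, C₁⁆ = -((2 : ℝ) • D)) (hP₂C₂ : ⁅P₂, C₂⁆ = -((2 : ℝ) • D))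
    (hP₁C₂ : ⁅P₁, C₂⁆ = (2 : ℝ) • J) (hP₂C₁ : ⁅P₂, C₁⁆ = -((2 : ℝ) • J))
    (hP01 : ⁅P₀, P₁⁆ = 0) (hP02 : ⁅P₀, P₂⁆ = 0) (hP12 : ⁅P₁, P₂⁆ = 0)
    (hC01 : ⁅C₀, C₁⁆ = 0) (hC02 : ⁅C₀, C₂⁆ = 0) (hC12 : ⁅C₁, C₂⁆ = 0) :
    let r₁₂ := z • (w12 D P₀ + w12 K₁ P₁ + w12 (K₂ + J) P₂)
    let r₁₃ := z • (w13 D P₀ + w13 K₁ P₁ + w13 (K₂ + J) P₂)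
    let r₂₃ := z • (w23 D P₀ + w23 K₁ P₁ + w23 (K₂ + J) P₂)
    ⁅r₁₂, r₁₃⁆ + ⁅r₁₂, r₂₃⁆ + ⁅r₁₃, r₂₃⁆ = 0 := by
  have rJP₁ : ⁅P₁, J⁆ = -P₂ := by rw [← lie_skew, hJP₁]
  have rJP₂ : ⁅P₂, J⁆ = -(-P₁) := by rw [← lie_skew, hJP₂]
  have rJK₁ : ⁅K₁, J⁆ = -K₂ := by rw [← lie_skew, hJK₁]
  have rJK₂ : ⁅K₂, J⁆ = -(-K₁) := by rw [← lie_skew, hJK₂]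
  have rJP₀ : ⁅P₀, J⁆ = -(0 : L) := by rw [← lie_skew, hJP₀]
  have rJD : ⁅D, J⁆ = -(0 : L) := by rw [← lie_skew, hJD]
  have rDP₀ : ⁅P₀, D⁆ = -P₀ := by rw [← lie_skew, hDP₀]
  have rDP₁ : ⁅P₁, D⁆ = -P₁ := by rw [← lie_skew, hDP₁]
  have rDP₂ : ⁅P₂, D⁆ = -P₂ := by rw [← lie_skew, hDP₂]
  have rDK₁ : ⁅K₁, D⁆ = -(0 : L) := by rw [← lie_skew, hDK₁]
  have rDK₂ : ⁅K₂, D⁆ = -(0 : L) := by rw [← lie_skew, hDK₂]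
  have rK₁P₀ : ⁅P₀, K₁⁆ = -P₁ := by rw [← lie_skew, hK₁P₀]
  have rK₂P₀ : ⁅P₀, K₂⁆ = -P₂ := by rw [← lie_skew, hK₂P₀]
  have rK₁P₁ : ⁅P₁, K₁⁆ = -P₀ := by rw [← lie_skew, hK₁P₁]
  have rK₂P₂ : ⁅P₂, K₂⁆ = -P₀ := by rw [← lie_skew, hK₂P₂]
  have rK₁P₂ : ⁅P₂, K₁⁆ = -(0 : L) := by rw [← lie_skew, hK₁P₂]
  have rK₂P₁ : ⁅P₁, K₂⁆ = -(0 : L) := by rw [← lie_skew, hK₂P₁]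
  have rKK : ⁅K₂, K₁⁆ = -(-J) := by rw [← lie_skew, hKK]
  have rP01 : ⁅P₁, P₀⁆ = -(0 : L) := by rw [← lie_skew, hP01]
  have rP02 : ⁅P₂, P₀⁆ = -(0 : L) := by rw [← lie_skew, hP02]
  have rP12 : ⁅P₂, P₁⁆ = -(0 : L) := by rw [← lie_skew, hP12]
  intro r₁₂ r₁₃ r₂₃
  simp (config := { zetaDelta := true }) only [tsmul_lie, tlie_smul, tlie_add, tadd_lie,
    cw12_13, cw12_23, cw13_23, add_lie, lie_add,
    hJP₁, hJP₂, hJK₁, hJK₂, hJP₀, hJD, hDP₀, hDP₁, hDP₂, hDK₁, hDK₂,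
    hK₁P₀, hK₂P₀, hK₁P₁, hK₂P₂, hK₁P₂, hK₂P₁, hKK, hP01, hP02, hP12,
    rJP₁, rJP₂, rJK₁, rJK₂, rJP₀, rJD, rDP₀, rDP₁, rDP₂, rDK₁, rDK₂,
    rK₁P₀, rK₂P₀, rK₁P₁, rK₂P₂, rK₁P₂, rK₂P₁, rKK, rP01, rP02, rP12,
    lie_self, neg_neg, neg_zero, add_zero, zero_add]
  simp only [T_add₁, T_add₂, T_add₃, T_neg₁, T_neg₂, T_neg₃, T_zero₁, T_zero₂, T_zero₃,
    neg_neg, smul_zero, smul_neg, smul_add, smul_sub, add_zero, zero_add, sub_zero,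
    zero_sub, sub_neg_eq_add, neg_add_rev, sub_self]
  abel
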